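/- Fix an integer g ≥ 1 and let Q_1,…,Q_{g+1}, W_1,…,W_{g+1} be real numbers. Define C_{g−1}(Q,W) = min over the following collection: Q_i + Q_j for 1 ≤ i < j ≤ g+1; W_i + W_j for 1 ≤ i < j ≤ g+1; and Q_i + W_j for all pairs 1 ≤ i, j ≤ g+1 with j ≢ i and j ≢ i−1 modulo g+1. Assume C_{g−1}(Q,W) > 0, W_1 > 0, and that Q_1 = 0 or W_{g+1} = 0. Then Q_i > 0 for all 2 ≤ i ≤ g, and W_j > 0 for all 1 ≤ j ≤ g. -/

import Mathlib

/-- The conserved quantity `C_{g−1}` of the ultra-discrete `(g+1)`-periodic Toda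
lattice: the minimum of `Q_i + Q_j` (`i < j`), `W_i + W_j` (`i < j`), and
`Q_i + W_j` (`j ≢ i, i−1 mod g+1`).  Indices are 0-based: the coordinate `Q k`
is the variable `Q_{k+1}` of the paper. -/
noncomputable def Cgm1 (g : ℕ) (Q W : Fin (g + 1) → ℝ) : ℝ :=
  sInf ({x | ∃ i j : Fin (g + 1), i < j ∧ x = Q i + Q j} ∪
        {x | ∃ i j : Fin (g + 1), i < j ∧ x = W i + W j} ∪
        {x | ∃ i j : Fin (g + 1), j ≠ i ∧ j ≠ i - 1 ∧ x = Q i + W j})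

/-! A point with `C_{g−1} > 0` has every term of the minimum positive. If `Q_1 = 0`, the terms
`Q_1 + Q_i` and `Q_1 + W_j` (`j ≠ g+1`) give the claim for `Q_i` and for `W_j`, `j ≥ 2`; if
`W_{g+1} = 0`, the terms `Q_i + W_{g+1}` (`i ≠ 1`) and `W_j + W_{g+1}` do. -/

theorem Real.pos_of_mem_of_sInf_pos {s : Set ℝ} (hs : 0 < sInf s) {x : ℝ} (hx : x ∈ s) :
    0 < x :=
  lt_of_not_ge fun hx0 => (Real.sInf_nonpos' ⟨x, hx, hx0⟩).not_gt hs

theorem Fin.sub_one_eq_last_iff {n : ℕ} {i : Fin (n + 1)} : i - 1 = Fin.last n ↔ i = 0 := by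
  by_cases h0 : i = 0
  · simp only [h0, iff_true]
    ext
    simp
  · simp only [h0, iff_false]
    intro h
    have := congrArg Fin.val h
    rw [Fin.val_sub_one_of_ne_zero h0, Fin.val_last] at this
    omega

section Cgm1

variable {g : ℕ} {Q W : Fin (g + 1) → ℝ}

theorem Q_add_Q_pos (hC : 0 < Cgm1 g Q W) {i j : Fin (g + 1)} (hij : i < j) :
    0 < Q i + Q j :=
  Real.pos_of_mem_of_sInf_pos hC (Or.inl (Or.inl ⟨i, j, hij, rfl⟩))

theorem W_add_W_pos (hC : 0 < Cgm1 g Q W) {i j : Fin (g + 1)} (hij : i < j) :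
    0 < W i + W j :=
  Real.pos_of_mem_of_sInf_pos hC (Or.inl (Or.inr ⟨i, j, hij, rfl⟩))

theorem Q_add_W_pos (hC : 0 < Cgm1 g Q W) {i j : Fin (g + 1)} (hji : j ≠ i) (hji' : j ≠ i - 1) :
    0 < Q i + W j :=
  Real.pos_of_mem_of_sInf_pos hC (Or.inr ⟨i, j, hji, hji', rfl⟩)

end Cgm1

theorem T0_interior_positive_general (g : ℕ) (Q W : Fin (g + 1) → ℝ)
    (hC : 0 < Cgm1 g Q W) (hW1 : 0 < W 0)
    (hQW : Q 0 = 0 ∨ W (Fin.last g) = 0) :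
    (∀ i : Fin (g + 1), 2 ≤ (i : ℕ) + 1 → (i : ℕ) + 1 ≤ g → 0 < Q i) ∧
    (∀ j : Fin (g + 1), (j : ℕ) + 1 ≤ g → 0 < W j) := by
  have lt_last : ∀ k : Fin (g + 1), (k : ℕ) + 1 ≤ g → k < Fin.last g := fun k hk => by
    rw [Fin.lt_def, Fin.val_last]; omega
  have ne_zero : ∀ k : Fin (g + 1), 2 ≤ (k : ℕ) + 1 → k ≠ 0 := fun k hk h0 => by
    simp [h0] at hk
  rcases hQW with hQ0 | hWlast
  · refine ⟨fun i hi hig => ?_, fun j hjg => ?_⟩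
    · linarith [Q_add_Q_pos hC (Fin.pos_iff_ne_zero.2 (ne_zero i hi))]
    · rcases eq_or_ne j 0 with rfl | hj0
      · exact hW1
      · have hj_last : j ≠ 0 - 1 := by
          rw [Fin.sub_one_eq_last_iff.2 rfl]; exact (lt_last j hjg).ne
        linarith [Q_add_W_pos hC hj0 hj_last]
  · refine ⟨fun i hi hig => ?_, fun j hjg => ?_⟩
    · have hlast_sub : Fin.last g ≠ i - 1 := fun h =>
        ne_zero i hi (Fin.sub_one_eq_last_iff.1 h.symm)
      linarith [Q_add_W_pos hC (lt_last i hig).ne' hlast_sub]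
    · linarith [W_add_W_pos hC (lt_last j hjg)]

/-- If `C_{g−1} > 0`, `W_1 > 0` and (`Q_1 = 0` or `W_{g+1} = 0`), then
`Q_i > 0` for `2 ≤ i ≤ g` and `W_j > 0` for `1 ≤ j ≤ g` (1-based subscripts;
the subscript of the 0-based coordinate `Q i` is `(i : ℕ) + 1`). -/
theorem T0_interior_positive (g : ℕ) (hg : 1 ≤ g) (Q W : Fin (g + 1) → ℝ)
    (hC : 0 < Cgm1 g Q W) (hW1 : 0 < W 0)
    (hQW : Q 0 = 0 ∨ W (Fin.last g) = 0) :
    (∀ i : Fin (g + 1), 2 ≤ (i : ℕ) + 1 → (i : ℕ) + 1 ≤ g → 0 < Q i) ∧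
    (∀ j : Fin (g + 1), (j : ℕ) + 1 ≤ g → 0 < W j) :=
  T0_interior_positive_general g Q W hC hW1 hQW
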